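/- If φ is a symmetric log-concave probability density on ℝ with variance 1, then φ(s) ≤ 2·e^{-|s|/2} for all s ∈ ℝ. More generally, if the variance is σ², then σ·φ(σs) ≤ 2·e^{-|s|/2}. -/

import Mathlib

/-!
Let `M = φ 0` and `m = σ M`. Log-concavity and symmetry make `φ` nonincreasing on `[0, ∞)`.
On the half-line, `φ` and the exponential profile `M e^{-2Mx}` have the same value at `0` and
the same mass `1/2`; by log-concavity their difference changes sign once, from `+` to `-`, so the
second moment of `φ` is at most that of the exponential, which gives `m² ≤ 1/2`. A Chebyshev
estimate at the point `1/(3M)` gives `m² ≥ 1/27`.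

For `|s| ≤ 2` the bound `σ φ(σs) ≤ m` suffices, and for `2 ≤ |s| ≤ 4` so does
`|s| σ φ(σs) ≤ 1/2`, which comes from monotonicity and the mass. At `s = 4` the second moment
forces `σ φ(4σ) ≤ 3/128 ≤ m e^{-2}`, and log-concavity propagates this rate of decay to all
larger arguments.
-/

open MeasureTheory

open Set Real

def IsLogConcave (φ : ℝ → ℝ) : Prop :=
  ∀ x y : ℝ, ∀ α ∈ Icc (0:ℝ) 1, φ x ^ (1 - α) * φ y ^ α ≤ φ ((1 - α) * x + α * y)

lemma rpow_one_sub_mul_rpow_self {a : ℝ} (ha : 0 ≤ a) (α : ℝ) : a ^ (1 - α) * a ^ α = a := by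
  rw [← rpow_add' ha (by simp), sub_add_cancel, rpow_one]

lemma rpow_one_sub_mul_mul_exp_rpow {a : ℝ} (ha : 0 ≤ a) (α b t : ℝ) :
    a ^ (1 - α) * (a * exp (-(b * t))) ^ α = a * exp (-(b * (α * t))) := by
  rw [mul_rpow ha (exp_nonneg _), ← exp_mul, ← mul_assoc, rpow_one_sub_mul_rpow_self ha]
  ring_nf

namespace IsLogConcave

variable {φ : ℝ → ℝ}

lemma apply_zero_rpow_mul_le (h : IsLogConcave φ) {α : ℝ} (hα : α ∈ Icc (0:ℝ) 1) (y : ℝ) :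
    φ 0 ^ (1 - α) * φ y ^ α ≤ φ (α * y) := by
  simpa using h 0 y α hα

lemma antitoneOn_of_even (h : IsLogConcave φ) (hnn : ∀ x, 0 ≤ φ x) (heven : φ.Even) :
    AntitoneOn φ (Ici 0) := by
  intro x (hx : 0 ≤ x) y _ hxy
  obtain hy | hy := (show (0:ℝ) ≤ y from le_trans hx hxy).eq_or_lt
  · rw [le_antisymm hxy (hy ▸ hx)]
  have hα : (x + y) / (2 * y) ∈ Icc (0:ℝ) 1 :=
    ⟨by positivity, by rw [div_le_one (by positivity)]; linarith⟩
  have key := h (-y) y _ hα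
  rwa [heven y, rpow_one_sub_mul_rpow_self (hnn y),
    show (1 - (x + y) / (2 * y)) * -y + (x + y) / (2 * y) * y = x by field_simp; ring] at key

lemma mul_exp_le_of_le (h : IsLogConcave φ) (hnn : ∀ x, 0 ≤ φ x) {b s t : ℝ} (hs : 0 ≤ s)
    (hst : s ≤ t) (ht : φ 0 * exp (-(b * t)) ≤ φ t) : φ 0 * exp (-(b * s)) ≤ φ s := by
  obtain ht0 | ht0 := (hs.trans hst).eq_or_lt
  · rwa [le_antisymm hst (ht0 ▸ hs)]
  have hα : s / t ∈ Icc (0:ℝ) 1 := ⟨by positivity, by rwa [div_le_one ht0]⟩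
  calc φ 0 * exp (-(b * s)) = φ 0 ^ (1 - s / t) * (φ 0 * exp (-(b * t))) ^ (s / t) := by
        rw [rpow_one_sub_mul_mul_exp_rpow (hnn 0), div_mul_cancel₀ _ ht0.ne']
    _ ≤ φ 0 ^ (1 - s / t) * φ t ^ (s / t) :=
        mul_le_mul_of_nonneg_left (rpow_le_rpow (mul_nonneg (hnn 0) (exp_nonneg _)) ht hα.1)
          (rpow_nonneg (hnn 0) _)
    _ ≤ φ (s / t * t) := h.apply_zero_rpow_mul_le hα t
    _ = φ s := by rw [div_mul_cancel₀ _ ht0.ne']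

lemma le_mul_exp_of_le (h : IsLogConcave φ) (hnn : ∀ x, 0 ≤ φ x) (h0 : 0 < φ 0) {b y x : ℝ}
    (hy : 0 < y) (hyx : y ≤ x) (hφy : φ y ≤ φ 0 * exp (-(b * y))) :
    φ x ≤ φ 0 * exp (-(b * x)) := by
  have hx : 0 < x := hy.trans_le hyx
  have hα : y / x ∈ Icc (0:ℝ) 1 := ⟨by positivity, by rwa [div_le_one hx]⟩
  have key : φ 0 ^ (1 - y / x) * φ x ^ (y / x) ≤
      φ 0 ^ (1 - y / x) * (φ 0 * exp (-(b * x))) ^ (y / x) :=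
    calc φ 0 ^ (1 - y / x) * φ x ^ (y / x) ≤ φ (y / x * x) := h.apply_zero_rpow_mul_le hα x
      _ ≤ φ 0 * exp (-(b * (y / x * x))) := by rwa [div_mul_cancel₀ _ hx.ne']
      _ = _ := (rpow_one_sub_mul_mul_exp_rpow h0.le _ _ _).symm
  exact (rpow_le_rpow_iff (hnn x) (by positivity) (by positivity)).1
    (le_of_mul_le_mul_left key (by positivity))

end IsLogConcave

lemma Function.Even.apply_abs {α β : Type*} [AddGroup α] [LinearOrder α] {f : α → β}
    (hf : f.Even) (x : α) : f |x| = f x := by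
  rcases abs_choice x with h | h <;> simp [h, hf x]

lemma Function.Even.integral_eq_two_mul_setIntegral_Ioi {f : ℝ → ℝ} (hf : f.Even) :
    ∫ x, f x = 2 * ∫ x in Ioi 0, f x := by
  simpa [hf.apply_abs] using integral_comp_abs (f := f)

theorem integral_mul_le_integral_mul_of_sub_mul_sub_nonpos {α : Type*} [MeasurableSpace α]
    {μ : Measure α} {f g w : α → ℝ} (c : ℝ) (hf : Integrable f μ) (hg : Integrable g μ)
    (hwf : Integrable (fun x => w x * f x) μ) (hwg : Integrable (fun x => w x * g x) μ)
    (hfg : ∫ x, f x ∂μ = ∫ x, g x ∂μ) (hc : ∀ᵐ x ∂μ, (w x - c) * (f x - g x) ≤ 0) :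
    ∫ x, w x * f x ∂μ ≤ ∫ x, w x * g x ∂μ := by
  have hexpand : ∫ x, (w x - c) * (f x - g x) ∂μ =
      (∫ x, w x * f x ∂μ - ∫ x, w x * g x ∂μ) - c * (∫ x, f x ∂μ - ∫ x, g x ∂μ) := by
    simp_rw [show ∀ x, (w x - c) * (f x - g x) = (w x * f x - w x * g x) - c * (f x - g x) by
      intro x; ring]
    rw [integral_sub (f := fun x => w x * f x - w x * g x) (g := fun x => c * (f x - g x))
        (hwf.sub hwg) ((hf.sub hg).const_mul c),
      integral_sub hwf hwg,
      integral_const_mul, integral_sub hf hg]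
  have := integral_nonpos_of_ae hc
  rw [hexpand, hfg, sub_self, mul_zero, sub_zero] at this
  linarith

lemma integral_Ioi_exp_neg_mul {b : ℝ} (hb : 0 < b) : ∫ x in Ioi 0, exp (-(b * x)) = 1 / b := by
  simpa using integral_rpow_mul_exp_neg_mul_Ioi one_pos hb

lemma integral_Ioi_sq_mul_exp_neg_mul {b : ℝ} (hb : 0 < b) :
    ∫ x in Ioi 0, x ^ 2 * exp (-(b * x)) = 2 / b ^ 3 := by
  have h := integral_rpow_mul_exp_neg_mul_Ioi (a := 3) (by norm_num) hb
  have hΓ : Gamma 3 = 2 := by simp [Nat.factorial]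
  rw [hΓ, show (3:ℝ) - 1 = (2:ℕ) by norm_num, show (3:ℝ) = (3:ℕ) by norm_num] at h
  simp only [rpow_natCast] at h
  rw [h]
  field_simp

section Antitone

variable {φ : ℝ → ℝ}

lemma setIntegral_Ioc_mul_le_of_antitoneOn {w : ℝ → ℝ} (hφ : AntitoneOn φ (Ici 0))
    (hnn : ∀ x, 0 ≤ φ x) (hw : ∀ x, 0 ≤ w x) {a : ℝ} (hwa : IntegrableOn w (Ioc 0 a))
    (hwφ : IntegrableOn (fun x => w x * φ x) (Ioi 0)) :
    (∫ x in Ioc 0 a, w x) * φ a ≤ ∫ x in Ioi 0, w x * φ x := by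
  rw [← integral_mul_const]
  calc ∫ x in Ioc 0 a, w x * φ a ≤ ∫ x in Ioc 0 a, w x * φ x :=
        setIntegral_mono_on (hwa.mul_const _) (hwφ.mono_set Ioc_subset_Ioi_self) measurableSet_Ioc
          fun x hx => mul_le_mul_of_nonneg_left
            (hφ (mem_Ici.2 hx.1.le) (mem_Ici.2 (hx.1.le.trans hx.2)) hx.2) (hw x)
    _ ≤ ∫ x in Ioi 0, w x * φ x :=
        setIntegral_mono_set hwφ (ae_of_all _ fun x => mul_nonneg (hw x) (hnn x))
          Ioc_subset_Ioi_self.eventuallyLE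

lemma sq_mul_sub_le_setIntegral_Ioi_sq_mul (hφ : AntitoneOn φ (Ici 0)) (hnn : ∀ x, 0 ≤ φ x)
    (hint : IntegrableOn φ (Ioi 0)) (hint2 : IntegrableOn (fun x => x ^ 2 * φ x) (Ioi 0))
    {a : ℝ} (ha : 0 ≤ a) :
    a ^ 2 * ((∫ x in Ioi 0, φ x) - a * φ 0) ≤ ∫ x in Ioi 0, x ^ 2 * φ x := by
  have hsplit : ∫ x in Ioi 0, φ x = (∫ x in Ioc 0 a, φ x) + ∫ x in Ioi a, φ x := by
    rw [← setIntegral_union (Ioc_disjoint_Ioi le_rfl) measurableSet_Ioi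
      (hint.mono_set Ioc_subset_Ioi_self) (hint.mono_set (Ioi_subset_Ioi ha)),
      Ioc_union_Ioi_eq_Ioi ha]
  have hnear : ∫ x in Ioc 0 a, φ x ≤ a * φ 0 := by
    calc ∫ x in Ioc 0 a, φ x ≤ ∫ x in Ioc 0 a, φ 0 :=
          setIntegral_mono_on (hint.mono_set Ioc_subset_Ioi_self) (by simp) measurableSet_Ioc
            fun x hx => hφ (mem_Ici.2 le_rfl) (mem_Ici.2 hx.1.le) hx.1.le
      _ = a * φ 0 := by simp [ha]
  have hfar : a ^ 2 * ∫ x in Ioi a, φ x ≤ ∫ x in Ioi a, x ^ 2 * φ x := by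
    rw [← integral_const_mul]
    exact setIntegral_mono_on ((hint.mono_set (Ioi_subset_Ioi ha)).const_mul _)
      (hint2.mono_set (Ioi_subset_Ioi ha)) measurableSet_Ioi fun x (hx : a < x) =>
        mul_le_mul_of_nonneg_right (pow_le_pow_left₀ ha hx.le 2) (hnn x)
  have htail : ∫ x in Ioi a, x ^ 2 * φ x ≤ ∫ x in Ioi 0, x ^ 2 * φ x :=
    setIntegral_mono_set hint2 (ae_of_all _ fun x => mul_nonneg (sq_nonneg x) (hnn x))
      (Ioi_subset_Ioi ha).eventuallyLE
  calc a ^ 2 * ((∫ x in Ioi 0, φ x) - a * φ 0) ≤ a ^ 2 * ∫ x in Ioi a, φ x := by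
        gcongr; linarith
    _ ≤ ∫ x in Ioi 0, x ^ 2 * φ x := hfar.trans htail

end Antitone

namespace IsLogConcave

variable {φ : ℝ → ℝ}

lemma exists_ae_sq_sub_mul_sub_mul_exp_nonpos (h : IsLogConcave φ) (hnn : ∀ x, 0 ≤ φ x)
    (hint : IntegrableOn φ (Ioi 0)) {b : ℝ}
    (he : IntegrableOn (fun x => φ 0 * exp (-(b * x))) (Ioi 0))
    (hmass : ∫ x in Ioi 0, φ x = ∫ x in Ioi 0, φ 0 * exp (-(b * x))) :
    ∃ c, ∀ᵐ x ∂(volume.restrict (Ioi 0)), (x ^ 2 - c) * (φ x - φ 0 * exp (-(b * x))) ≤ 0 := by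
  set S := {t : ℝ | φ 0 * exp (-(b * t)) ≤ φ t}
  have hS : ∀ x t, 0 ≤ x → x < t → t ∈ S → x ∈ S := fun x t hx hxt ht =>
    h.mul_exp_le_of_le hnn hx hxt.le ht
  have h0S : (0:ℝ) ∈ S := by simp [S]
  -- On `[0, ∞)` the set `S` is an initial segment, so the sign change happens at `sSup S`. If `S`
  -- is unbounded, then `φ` dominates the exponential and equal masses force `φ = e` a.e.
  by_cases hbdd : BddAbove S
  · refine ⟨sSup S ^ 2, ae_restrict_of_forall_mem measurableSet_Ioi fun x (hx : 0 < x) => ?_⟩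
    by_cases hxS : x ∈ S
    · exact mul_nonpos_of_nonpos_of_nonneg
        (by nlinarith [le_csSup hbdd hxS]) (sub_nonneg.2 hxS)
    · have hsup : sSup S ≤ x := csSup_le ⟨0, h0S⟩ fun t ht =>
        not_lt.1 fun hxt => hxS (hS x t hx.le hxt ht)
      exact mul_nonpos_of_nonneg_of_nonpos
        (by nlinarith [le_csSup hbdd h0S]) (sub_nonpos.2 (not_le.1 hxS).le)
  · have hle : ∀ x ∈ Ioi (0:ℝ), φ 0 * exp (-(b * x)) ≤ φ x := fun x (hx : 0 < x) => by
      obtain ⟨t, ht, hxt⟩ := not_bddAbove_iff.1 hbdd x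
      exact hS x t hx.le hxt ht
    have heq : (fun x => φ 0 * exp (-(b * x))) =ᵐ[volume.restrict (Ioi 0)] φ :=
      (integral_eq_iff_of_ae_le he hint (ae_restrict_of_forall_mem measurableSet_Ioi hle)).1
        hmass.symm
    exact ⟨0, heq.mono fun x hx => by simp [hx]⟩

theorem setIntegral_Ioi_sq_mul_le (h : IsLogConcave φ) (hnn : ∀ x, 0 ≤ φ x)
    (hint : IntegrableOn φ (Ioi 0)) (hint2 : IntegrableOn (fun x => x ^ 2 * φ x) (Ioi 0))
    {b : ℝ} (hb : 0 < b) (hmass : ∫ x in Ioi 0, φ x = φ 0 / b) :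
    ∫ x in Ioi 0, x ^ 2 * φ x ≤ 2 * φ 0 / b ^ 3 := by
  have he : IntegrableOn (fun x => φ 0 * exp (-(b * x))) (Ioi 0) :=
    Integrable.const_mul (show IntegrableOn (fun x => exp (-(b * x))) (Ioi 0) volume by
      simpa only [neg_mul] using exp_neg_integrableOn_Ioi 0 hb) (φ 0)
  have he2 : IntegrableOn (fun x => x ^ 2 * (φ 0 * exp (-(b * x)))) (Ioi 0) := by
    have : IntegrableOn (fun x => φ 0 * (x ^ 2 * exp (-(b * x)))) (Ioi 0) :=
      Integrable.const_mul (Integrable.of_integral_ne_zero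
        (by rw [integral_Ioi_sq_mul_exp_neg_mul hb]; positivity)) _
    exact this.congr_fun (fun x _ => mul_left_comm _ _ _) measurableSet_Ioi
  have hmass' : ∫ x in Ioi 0, φ x = ∫ x in Ioi 0, φ 0 * exp (-(b * x)) := by
    rw [hmass, integral_const_mul, integral_Ioi_exp_neg_mul hb, mul_one_div]
  obtain ⟨c, hc⟩ := h.exists_ae_sq_sub_mul_sub_mul_exp_nonpos hnn hint he hmass'
  calc ∫ x in Ioi 0, x ^ 2 * φ x ≤ ∫ x in Ioi 0, x ^ 2 * (φ 0 * exp (-(b * x))) :=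
        integral_mul_le_integral_mul_of_sub_mul_sub_nonpos c hint he hint2 he2 hmass' hc
    _ = 2 * φ 0 / b ^ 3 := by
        simp_rw [mul_left_comm _ (φ 0)]
        rw [integral_const_mul, integral_Ioi_sq_mul_exp_neg_mul hb]
        ring

end IsLogConcave

section HalfLine

variable {φ : ℝ → ℝ} {σ : ℝ}

lemma IsLogConcave.sq_mul_apply_zero_le_half (h : IsLogConcave φ) (hnn : ∀ x, 0 ≤ φ x)
    (hint : IntegrableOn φ (Ioi 0)) (hint2 : IntegrableOn (fun x => x ^ 2 * φ x) (Ioi 0))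
    (hhalf : ∫ x in Ioi 0, φ x = 1 / 2) (hhalf2 : ∫ x in Ioi 0, x ^ 2 * φ x = σ ^ 2 / 2)
    (h0 : 0 < φ 0) : (σ * φ 0) ^ 2 ≤ 1 / 2 := by
  have := h.setIntegral_Ioi_sq_mul_le hnn hint hint2 (b := 2 * φ 0) (by positivity)
    (by rw [hhalf]; field_simp)
  rw [hhalf2, show 2 * φ 0 / (2 * φ 0) ^ 3 = 1 / (4 * φ 0 ^ 2) by field_simp; ring,
    le_div_iff₀ (by positivity)] at this
  nlinarith

lemma inv_twentySeven_le_sq_mul_apply_zero (hanti : AntitoneOn φ (Ici 0))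
    (hnn : ∀ x, 0 ≤ φ x) (hint : IntegrableOn φ (Ioi 0))
    (hint2 : IntegrableOn (fun x => x ^ 2 * φ x) (Ioi 0))
    (hhalf : ∫ x in Ioi 0, φ x = 1 / 2) (hhalf2 : ∫ x in Ioi 0, x ^ 2 * φ x = σ ^ 2 / 2)
    (h0 : 0 < φ 0) : 1 / 27 ≤ (σ * φ 0) ^ 2 := by
  have := sq_mul_sub_le_setIntegral_Ioi_sq_mul hanti hnn hint hint2 (a := 1 / (3 * φ 0))
    (by positivity)
  rw [hhalf, hhalf2, show (1 / (3 * φ 0)) ^ 2 * (1 / 2 - 1 / (3 * φ 0) * φ 0) =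
    1 / (54 * φ 0 ^ 2) by field_simp; ring, div_le_iff₀ (by positivity)] at this
  nlinarith

end HalfLine

lemma exp_two_lt_eight : exp 2 < 8 := by
  have h : exp 2 = exp 1 ^ 2 := by rw [← exp_nat_mul]; norm_num
  nlinarith [exp_one_lt_d9, exp_pos 1]

section ScaledDensity

variable {φ : ℝ → ℝ} {σ : ℝ}

lemma apply_mul_le_mul_exp_neg_half (h : IsLogConcave φ) (hnn : ∀ x, 0 ≤ φ x)
    (hanti : AntitoneOn φ (Ici 0)) (hint2 : IntegrableOn (fun x => x ^ 2 * φ x) (Ioi 0))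
    (hhalf2 : ∫ x in Ioi 0, x ^ 2 * φ x = σ ^ 2 / 2) (hσ : 0 < σ) (h0 : 0 < φ 0)
    (hlow : 1 / 27 ≤ (σ * φ 0) ^ 2) {u : ℝ} (hu : 4 ≤ u) :
    φ (σ * u) ≤ φ 0 * exp (-(u / 2)) := by
  have hmom : σ * φ (4 * σ) ≤ 3 / 128 := by
    have := setIntegral_Ioc_mul_le_of_antitoneOn hanti hnn (w := fun x => x ^ 2) (a := 4 * σ)
      sq_nonneg (continuous_pow 2).integrableOn_Ioc hint2
    rw [hhalf2, ← intervalIntegral.integral_of_le (by positivity), integral_pow] at this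
    norm_num at this
    refine le_of_mul_le_mul_left ?_ (pow_pos hσ 2)
    nlinarith
  have hm : 3 / 16 ≤ σ * φ 0 := by nlinarith [mul_nonneg hσ.le h0.le]
  rw [show u / 2 = 1 / (2 * σ) * (σ * u) by field_simp]
  refine h.le_mul_exp_of_le hnn h0 (y := 4 * σ) (by positivity) (by nlinarith) ?_
  rw [show 1 / (2 * σ) * (4 * σ) = 2 by field_simp; norm_num, exp_neg,
    ← div_eq_mul_inv, le_div_iff₀ (exp_pos 2)]
  refine le_of_mul_le_mul_left ?_ hσ
  nlinarith [mul_le_mul hmom exp_two_lt_eight.le (exp_pos _).le (by norm_num)]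

lemma scaled_mul_exp_half_le_two (h : IsLogConcave φ) (hnn : ∀ x, 0 ≤ φ x)
    (hanti : AntitoneOn φ (Ici 0)) (hint : IntegrableOn φ (Ioi 0))
    (hint2 : IntegrableOn (fun x => x ^ 2 * φ x) (Ioi 0))
    (hhalf : ∫ x in Ioi 0, φ x = 1 / 2) (hhalf2 : ∫ x in Ioi 0, x ^ 2 * φ x = σ ^ 2 / 2)
    (hσ : 0 < σ) (h0 : 0 < φ 0) (hup : (σ * φ 0) ^ 2 ≤ 1 / 2) (hlow : 1 / 27 ≤ (σ * φ 0) ^ 2)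
    {u : ℝ} (hu : 0 ≤ u) : σ * φ (σ * u) * exp (u / 2) ≤ 2 := by
  rcases le_or_gt u 2 with hu2 | hu2
  · have hXm : σ * φ (σ * u) ≤ σ * φ 0 :=
      mul_le_mul_of_nonneg_left (hanti (mem_Ici.2 le_rfl) (mem_Ici.2 (by positivity))
        (by positivity)) hσ.le
    have he : exp (u / 2) ≤ exp 1 := exp_le_exp.2 (by linarith)
    have hm : σ * φ 0 * exp 1 ≤ 2 := by
      refine (pow_le_pow_iff_left₀ (by positivity) zero_le_two two_ne_zero).1 ?_
      rw [mul_pow, ← exp_nat_mul]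
      norm_num
      nlinarith [exp_two_lt_eight]
    exact (mul_le_mul hXm he (exp_pos _).le (by positivity)).trans hm
  rcases le_or_gt u 4 with hu4 | hu4
  · have hmass : (σ * u) * φ (σ * u) ≤ 1 / 2 := by
      simpa [hhalf, max_eq_left (mul_nonneg hσ.le hu)] using
        setIntegral_Ioc_mul_le_of_antitoneOn hanti hnn
        (w := fun _ => 1) (a := σ * u) (fun _ => zero_le_one) (by simp) (by simpa using hint)
    have hX4 : σ * φ (σ * u) ≤ 1 / 4 := by nlinarith
    have he : exp (u / 2) ≤ exp 2 := exp_le_exp.2 (by linarith)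
    nlinarith [mul_le_mul hX4 he (exp_pos _).le (by norm_num), exp_two_lt_eight]
  have hdecay := apply_mul_le_mul_exp_neg_half h hnn hanti hint2 hhalf2 hσ h0 hlow hu4.le
  calc σ * φ (σ * u) * exp (u / 2) ≤ σ * (φ 0 * exp (-(u / 2))) * exp (u / 2) := by gcongr
    _ = σ * φ 0 := by rw [exp_neg]; field_simp
    _ ≤ 2 := by nlinarith

end ScaledDensity

theorem symmetric_logconcave_density_exponential_decay_general
    (φ : ℝ → ℝ) (σ : ℝ)
    (hnn : ∀ s, 0 ≤ φ s)
    (heven : ∀ s, φ (-s) = φ s)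
    (hlc : ∀ x y : ℝ, ∀ α ∈ Set.Icc (0:ℝ) 1,
      φ x ^ (1 - α) * φ y ^ α ≤ φ ((1 - α) * x + α * y))
    (hint : Integrable φ)
    (hmass : ∫ s, φ s = 1)
    (hmom : Integrable (fun s => s ^ 2 * φ s))
    (hvar : ∫ s, s ^ 2 * φ s = σ ^ 2) :
    ∀ s : ℝ, σ * φ (σ * s) ≤ 2 * Real.exp (-|s| / 2) := by
  intro s
  rcases le_or_gt σ 0 with hσ | hσ
  · exact (mul_nonpos_of_nonpos_of_nonneg hσ (hnn _)).trans (by positivity)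
  have hanti := IsLogConcave.antitoneOn_of_even hlc hnn heven
  have hhalf : ∫ x in Ioi 0, φ x = 1 / 2 := by
    linarith [Function.Even.integral_eq_two_mul_setIntegral_Ioi heven]
  have hhalf2 : ∫ x in Ioi 0, x ^ 2 * φ x = σ ^ 2 / 2 := by
    have heven2 : Function.Even fun x => x ^ 2 * φ x := fun x => by simp [heven x]
    linarith [heven2.integral_eq_two_mul_setIntegral_Ioi]
  have h0 : 0 < φ 0 := by
    by_contra! h0
    have : ∫ x in Ioi 0, φ x = 0 := setIntegral_eq_zero_of_forall_eq_zero fun x (hx : 0 < x) =>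
      le_antisymm ((hanti (mem_Ici.2 le_rfl) (mem_Ici.2 hx.le) hx.le).trans h0) (hnn x)
    linarith
  have hup := IsLogConcave.sq_mul_apply_zero_le_half hlc hnn hint.integrableOn
    hmom.integrableOn hhalf hhalf2 h0
  have hlow := inv_twentySeven_le_sq_mul_apply_zero hanti hnn hint.integrableOn
    hmom.integrableOn hhalf hhalf2 h0
  rw [← Function.Even.apply_abs heven, abs_mul, abs_of_pos hσ, neg_div, exp_neg,
    ← div_eq_mul_inv, le_div_iff₀ (exp_pos _)]
  exact scaled_mul_exp_half_le_two hlc hnn hanti hint.integrableOn hmom.integrableOn hhalf hhalf2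
    hσ h0 hup hlow (abs_nonneg s)

theorem symmetric_logconcave_density_exponential_decay
    (φ : ℝ → ℝ) (σ : ℝ) (hσ : 0 < σ)
    (hnn : ∀ s, 0 ≤ φ s)
    (heven : ∀ s, φ (-s) = φ s)
    (hlc : ∀ x y : ℝ, ∀ α ∈ Set.Icc (0:ℝ) 1,
      φ x ^ (1 - α) * φ y ^ α ≤ φ ((1 - α) * x + α * y))
    (hint : Integrable φ)
    (hmass : ∫ s, φ s = 1)
    (hmom : Integrable (fun s => s ^ 2 * φ s))
    (hvar : ∫ s, s ^ 2 * φ s = σ ^ 2) :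
    ∀ s : ℝ, σ * φ (σ * s) ≤ 2 * Real.exp (-|s| / 2) :=
  symmetric_logconcave_density_exponential_decay_general φ σ hnn heven hlc hint hmass hmom hvar
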